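/- The space Z (continuous functions g on [0,1] with 2^n ω(g,δ(n)) → 0 and norm |g|_{∞,ω}) is separable. -/

import Mathlib

open MeasureTheory Filter Set

noncomputable section

def modContC (f : C(Set.Icc (0:ℝ) 1, ℝ)) (δ : ℝ) : ℝ :=
  sSup {y | ∃ (h : ℝ) (t : Set.Icc (0:ℝ) 1), |h| ≤ δ ∧
    y = |f (Set.projIcc (0:ℝ) 1 zero_le_one ((t : ℝ) + h)) - f t|}

def memZ (δseq : ℕ → ℝ) (f : C(Set.Icc (0:ℝ) 1, ℝ)) : Prop :=
  Filter.Tendsto (fun n => (2:ℝ)^n * modContC f (δseq n)) Filter.atTop (nhds 0)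

def Znorm (δseq : ℕ → ℝ) (f : C(Set.Icc (0:ℝ) 1, ℝ)) : ℝ :=
  ‖f‖ + ⨆ n : ℕ, (2:ℝ)^n * modContC f (δseq n)

/-!
Send `f` to the pair `(f, Φ f)`, where `Φ f (n, t, s) = 2ⁿ (f (t + δₙ s) - f t)` for `n : ℕ`
(with `t + δₙ s` clamped to `[0,1]`) and `Φ f (∞, t, s) = 0`, on the compact metrizable space
`ℕ∞ × [0,1] × [-1,1]`. The condition `2ⁿ ω(f, δₙ) → 0` defining `Z` is exactly uniform
convergence of `Φ f (n, ·)` to `0`, i.e. the continuity of `Φ f` at `n = ∞`. Since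
`|f - g|_{∞,ω} ≤ |f - g|_∞ + ‖Φ f - Φ g‖_∞`, a countable subset of `Z` whose image is dense in
the image of `Z` is dense in `Z`, and one exists because `C[0,1] × C(ℕ∞ × [0,1] × [-1,1])` is
separable.
-/

open Topology TopologicalSpace unitInterval

section ENatExtension

variable {Y β : Type*} [UniformSpace β] {F : ℕ → Y → β} {f : Y → β}

theorem TendstoUniformly.recTopCoe_nhds_top (h : TendstoUniformly F f atTop) :
    TendstoUniformly (fun k : ℕ∞ => ENat.recTopCoe (C := fun _ => Y → β) f F k) f (𝓝 ⊤) := by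
  intro u hu
  obtain ⟨N, hN⟩ := eventually_atTop.1 (h u hu)
  filter_upwards [Ioi_mem_nhds (ENat.natCast_lt_top N)] with k hk y
  induction k using ENat.recTopCoe with
  | top => exact refl_mem_uniformity hu
  | coe n => exact hN n (by simpa using hk : N < n).le y

theorem TendstoUniformly.continuous_recTopCoe [TopologicalSpace Y] (hF : ∀ n, Continuous (F n))
    (hf : Continuous f) (h : TendstoUniformly F f atTop) :
    Continuous fun p : ℕ∞ × Y => ENat.recTopCoe (C := fun _ => Y → β) f F p.1 p.2 := by
  refine continuous_iff_continuousAt.2 fun ⟨k, y⟩ => ?_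
  induction k using ENat.recTopCoe with
  | top =>
    exact tendsto_comp_of_locally_uniform_limit hf.continuousAt
      (continuous_snd.tendsto _) fun u hu => ⟨univ, univ_mem,
        (continuous_fst.tendsto _).eventually (h.recTopCoe_nhds_top u hu) |>.mono
          fun q hq x _ => hq x⟩
  | coe n =>
    have hn : {(n : ℕ∞)} ×ˢ univ ∈ 𝓝 ((n : ℕ∞), y) :=
      prod_mem_nhds (ENat.isOpen_singleton (ENat.natCast_ne_top n) |>.mem_nhds rfl) univ_mem
    refine ((hF n).comp continuous_snd).continuousAt.congr ?_
    filter_upwards [hn] with q hq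
    rw [show q.1 = n from hq.1]
    rfl

end ENatExtension

theorem exists_countable_forall_dist_lt {α β : Type*} [PseudoMetricSpace β] [SeparableSpace β]
    (E : α → β) : ∃ D : Set α, D.Countable ∧ ∀ x, ∀ ε > 0, ∃ y ∈ D, dist (E x) (E y) < ε := by
  obtain ⟨t, htE, htc, hdense⟩ :=
    (IsSeparable.of_separableSpace (range E)).exists_countable_dense_subset
  choose g hg using fun b : t => htE b.2
  have := htc.to_subtype
  refine ⟨range g, countable_range g, fun x ε hε => ?_⟩
  obtain ⟨b, hbt, hb⟩ := Metric.mem_closure_iff.1 (hdense (mem_range_self x)) ε hε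
  exact ⟨g ⟨b, hbt⟩, mem_range_self _, by rwa [hg]⟩

local notation "pr" => Set.projIcc (0:ℝ) 1 zero_le_one

section ModulusOfContinuity

variable (f : C(I, ℝ))

theorem bddAbove_modContC_set (δ : ℝ) : BddAbove {y | ∃ (h : ℝ) (t : I), |h| ≤ δ ∧
    y = |f (pr ((t : ℝ) + h)) - f t|} := by
  refine ⟨2 * ‖f‖, ?_⟩
  rintro y ⟨h, t, -, rfl⟩
  calc |f (pr ((t : ℝ) + h)) - f t| ≤ ‖f (pr ((t : ℝ) + h))‖ + ‖f t‖ := abs_sub _ _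
    _ ≤ 2 * ‖f‖ := by linarith [f.norm_coe_le_norm (pr ((t : ℝ) + h)), f.norm_coe_le_norm t]

theorem abs_sub_le_modContC {δ h : ℝ} (t : I) (hh : |h| ≤ δ) :
    |f (pr ((t : ℝ) + h)) - f t| ≤ modContC f δ :=
  le_csSup (bddAbove_modContC_set f δ) ⟨h, t, hh, rfl⟩

theorem modContC_le_of_forall_mul {δ c : ℝ} (hδ : 0 ≤ δ) (hc : 0 ≤ c)
    (H : ∀ (t : I) (s : Icc (-1 : ℝ) 1), |f (pr ((t : ℝ) + δ * s)) - f t| ≤ c) :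
    modContC f δ ≤ c := by
  refine Real.sSup_le ?_ hc
  rintro y ⟨h, t, hh, rfl⟩
  obtain ⟨s, hs, rfl⟩ : h ∈ (δ * ·) '' Icc (-1) 1 := by
    rw [image_mul_left_Icc hδ (by norm_num)]
    simpa [neg_le] using abs_le.1 hh
  exact H t ⟨s, hs⟩

end ModulusOfContinuity

def shiftDiff (δseq : ℕ → ℝ) (f : C(I, ℝ)) (n : ℕ) (p : I × Icc (-1 : ℝ) 1) : ℝ :=
  2 ^ n * (f (pr ((p.1 : ℝ) + δseq n * p.2)) - f p.1)

section ShiftDiff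

variable {δseq : ℕ → ℝ}

theorem continuous_shiftDiff (f : C(I, ℝ)) (n : ℕ) : Continuous (shiftDiff δseq f n) := by
  unfold shiftDiff
  fun_prop

theorem shiftDiff_sub (f g : C(I, ℝ)) (n : ℕ) (p : I × Icc (-1 : ℝ) 1) :
    shiftDiff δseq (f - g) n p = shiftDiff δseq f n p - shiftDiff δseq g n p := by
  simp only [shiftDiff, ContinuousMap.sub_apply]
  ring

theorem abs_shiftDiff_le (f : C(I, ℝ)) (hδ : ∀ n, 0 ≤ δseq n) (n : ℕ) (p : I × Icc (-1 : ℝ) 1) :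
    |shiftDiff δseq f n p| ≤ 2 ^ n * modContC f (δseq n) := by
  rw [shiftDiff, abs_mul, abs_of_pos (by positivity)]
  gcongr
  refine abs_sub_le_modContC f p.1 ?_
  rw [abs_mul, abs_of_nonneg (hδ n)]
  exact mul_le_of_le_one_right (hδ n) (abs_le.2 p.2.2)

theorem tendstoUniformly_shiftDiff {f : C(I, ℝ)} (hf : memZ δseq f) (hδ : ∀ n, 0 ≤ δseq n) :
    TendstoUniformly (shiftDiff δseq f) 0 atTop := by
  rw [Metric.tendstoUniformly_iff]
  intro ε hε
  filter_upwards [(Metric.tendsto_nhds.1 hf) ε hε] with n hn p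
  rw [Real.dist_0_eq_abs] at hn
  rw [Pi.zero_apply, dist_zero_left, Real.norm_eq_abs]
  exact (abs_shiftDiff_le f hδ n p).trans_lt ((le_abs_self _).trans_lt hn)

end ShiftDiff

section ShiftDiffMap

variable {δseq : ℕ → ℝ} (hδ : ∀ n, 0 ≤ δseq n)

def shiftDiffMap (f : {f // memZ δseq f}) :
    C(ℕ∞ × (I × Icc (-1 : ℝ) 1), ℝ) :=
  ⟨fun p => ENat.recTopCoe (C := fun _ => I × Icc (-1 : ℝ) 1 → ℝ) 0 (shiftDiff δseq f) p.1 p.2,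
    (tendstoUniformly_shiftDiff f.2 hδ).continuous_recTopCoe (continuous_shiftDiff f)
      continuous_const⟩

theorem shiftDiffMap_natCast (f : {f // memZ δseq f})
    (n : ℕ) (p : I × Icc (-1 : ℝ) 1) : shiftDiffMap hδ f (n, p) = shiftDiff δseq f n p :=
  rfl

theorem pow_mul_modContC_sub_le (f g : {f // memZ δseq f}) (n : ℕ) :
    2 ^ n * modContC (f - g : C(I, ℝ)) (δseq n) ≤ ‖shiftDiffMap hδ f - shiftDiffMap hδ g‖ := by
  rw [← le_div_iff₀' (by positivity)]
  refine modContC_le_of_forall_mul _ (hδ n) (by positivity) fun t s => ?_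
  rw [le_div_iff₀' (by positivity)]
  have := (shiftDiffMap hδ f - shiftDiffMap hδ g).norm_coe_le_norm (n, (t, s))
  rwa [ContinuousMap.sub_apply, Real.norm_eq_abs, shiftDiffMap_natCast, shiftDiffMap_natCast,
    ← shiftDiff_sub, shiftDiff, abs_mul, abs_of_pos (by positivity)] at this

theorem Znorm_sub_le_two_mul_dist (f g : {f // memZ δseq f}) :
    Znorm δseq (f - g : C(I, ℝ)) ≤
      2 * dist ((f : C(I, ℝ)), shiftDiffMap hδ f) ((g : C(I, ℝ)), shiftDiffMap hδ g) := by
  have hsup : ⨆ n : ℕ, (2 : ℝ) ^ n * modContC (f - g : C(I, ℝ)) (δseq n) ≤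
      ‖shiftDiffMap hδ f - shiftDiffMap hδ g‖ :=
    ciSup_le (pow_mul_modContC_sub_le hδ f g)
  rw [Znorm, Prod.dist_eq, dist_eq_norm, dist_eq_norm]
  linarith [le_max_left ‖(f - g : C(I, ℝ))‖ ‖shiftDiffMap hδ f - shiftDiffMap hδ g‖,
    le_max_right ‖(f - g : C(I, ℝ))‖ ‖shiftDiffMap hδ f - shiftDiffMap hδ g‖]

end ShiftDiffMap

theorem Z_separable_general
    (δseq : ℕ → ℝ) (hmem : ∀ n, δseq n ∈ Set.Ioc (0:ℝ) 1) :
    ∃ D : Set C(Set.Icc (0:ℝ) 1, ℝ), D.Countable ∧ (∀ g ∈ D, memZ δseq g) ∧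
      ∀ f : C(Set.Icc (0:ℝ) 1, ℝ), memZ δseq f → ∀ ε > 0,
        ∃ g ∈ D, Znorm δseq (f - g) < ε := by
  have hδ n : 0 ≤ δseq n := (hmem n).1.le
  obtain ⟨D, hDc, hD⟩ := exists_countable_forall_dist_lt
    fun f : {f // memZ δseq f} => ((f : C(I, ℝ)), shiftDiffMap hδ f)
  refine ⟨Subtype.val '' D, hDc.image _, fun _ ⟨g, _, hg⟩ => hg ▸ g.2, fun f hf ε hε => ?_⟩
  obtain ⟨g, hgD, hfg⟩ := hD ⟨f, hf⟩ (ε / 2) (half_pos hε)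
  exact ⟨g, mem_image_of_mem _ hgD,
    (Znorm_sub_le_two_mul_dist hδ ⟨f, hf⟩ g).trans_lt (by linarith)⟩

/-- Z is separable: it has a countable subset which is dense for the
|·|_{∞,ω} norm. -/
theorem Z_separable
    (δseq : ℕ → ℝ) (hanti : StrictAnti δseq) (hmem : ∀ n, δseq n ∈ Set.Ioc (0:ℝ) 1)
    (hlim : Tendsto δseq atTop (nhds 0)) :
    ∃ D : Set C(Set.Icc (0:ℝ) 1, ℝ), D.Countable ∧ (∀ g ∈ D, memZ δseq g) ∧
      ∀ f : C(Set.Icc (0:ℝ) 1, ℝ), memZ δseq f → ∀ ε > 0,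
        ∃ g ∈ D, Znorm δseq (f - g) < ε :=
  Z_separable_general δseq hmem
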